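/- arXiv:2009.04168 — 3 statements merged into one kernel-verified Lean document; each statement's English description precedes it below -/
import Mathlib

section
/- Let X be a separable reflexive Banach space and (Ω, F, ℙ) a probability space. If C ⊆ X is nonempty, closed, convex, and bounded, then the set X₀ = {x ∈ L^∞(Ω, X) : x(ω) ∈ C a.s.} is convex, bounded, and closed with respect to the weak* topology of L^∞(Ω, X) = (L¹(Ω, X*))*. -/
/-!
Convexity and boundedness of `X₀` are inherited pointwise from `C`. For weak* closedness,
Hahn–Banach separation and the Lindelöf property of the separable space `X` write `C` as a
countable intersection of closed half-spaces `{φₙ ≤ cₙ}`. Hence `x(ω) ∈ C` a.s. iff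
`φₙ(x(ω)) ≤ cₙ` a.s. for every `n`, iff `∫_A φₙ(x(ω)) dℙ ≤ cₙ ℙ(A)` for every `n` and every
measurable `A`. The left-hand side is the pairing of `x` with `1_A φₙ ∈ L¹(Ω, X*)`, so each of
these conditions cuts out a weak*-closed half-space of `L^∞(Ω, X)`.
-/

open MeasureTheory Set Filter Topology TopologicalSpace

noncomputable instance : Fact ((1 : ENNReal) ≤ ⊤) := ⟨le_top⟩

/-- The weak* topology on `L^∞(Ω,X) = (L¹(Ω,X*))*`: the initial topology induced by the
pairings `x ↦ ∫ ⟨g(ω), x(ω)⟩ dℙ(ω)` with integrable `X*`-valued densities `g`. -/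
noncomputable def weakStarTopology {Ω : Type*} [MeasurableSpace Ω] (μ : Measure Ω)
    (X : Type*) [NormedAddCommGroup X] [NormedSpace ℝ X] :
    TopologicalSpace (Lp X ⊤ μ) :=
  ⨅ g ∈ {g : Ω → (X →L[ℝ] ℝ) | Integrable g μ},
    TopologicalSpace.induced
      (fun x : Lp X ⊤ μ => ∫ ω, g ω ((x : Ω → X) ω) ∂μ) inferInstance

theorem Convex.exists_countable_eq_biInter_halfSpaces {E : Type*} [TopologicalSpace E]
    [AddCommGroup E] [Module ℝ E] [IsTopologicalAddGroup E] [ContinuousSMul ℝ E]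
    [LocallyConvexSpace ℝ E] [SecondCountableTopology E] {C : Set E} (hconv : Convex ℝ C)
    (hcl : IsClosed C) :
    ∃ S : Set (StrongDual ℝ E × ℝ), S.Countable ∧ C = ⋂ q ∈ S, {y | q.1 y ≤ q.2} := by
  have hsep (x : ↥Cᶜ) : ∃ q : StrongDual ℝ E × ℝ, (∀ y ∈ C, q.1 y < q.2) ∧ q.2 < q.1 x := by
    obtain ⟨f, u, hC, hx⟩ := geometric_hahn_banach_closed_point hconv hcl x.2
    exact ⟨(f, u), hC, hx⟩
  choose q hqC hqx using hsep
  obtain ⟨T, hTc, hT⟩ := isOpen_iUnion_countable (fun x => {y | (q x).2 < (q x).1 y})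
    fun x => isOpen_lt continuous_const (q x).1.continuous
  refine ⟨q '' T, hTc.image q, Subset.antisymm ?_ fun y hy => ?_⟩
  · simp only [subset_iInter_iff, forall_mem_image]
    exact fun x _ y hy => (hqC x y hy).le
  · by_contra hyC
    have hyU : y ∈ ⋃ x, {y | (q x).2 < (q x).1 y} := mem_iUnion.2 ⟨⟨y, hyC⟩, hqx _⟩
    rw [← hT] at hyU
    obtain ⟨x, hxT, hyx : (q x).2 < (q x).1 y⟩ := mem_iUnion₂.1 hyU
    exact not_lt.2 (mem_iInter₂.1 hy (q x) (mem_image_of_mem q hxT)) hyx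

namespace MeasureTheory

variable {Ω : Type*} [MeasurableSpace Ω] {μ : Measure Ω}

theorem ae_le_const_iff_forall_setIntegral_le [IsFiniteMeasure μ] {f : Ω → ℝ}
    (hf : Integrable f μ) (c : ℝ) :
    (∀ᵐ ω ∂μ, f ω ≤ c) ↔ ∀ A, MeasurableSet A → ∫ ω in A, f ω ∂μ ≤ c * μ.real A := by
  simp_rw [mul_comm c, ← smul_eq_mul, ← setIntegral_const]
  refine ⟨fun h A _ => ?_, fun h => ae_le_of_forall_setIntegral_le hf (integrable_const c)
    fun A hA _ => h A hA⟩
  exact setIntegral_mono_ae_restrict hf.integrableOn (integrableOn_const (measure_ne_top _ _))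
    (ae_restrict_of_ae h)

variable {X : Type*} [NormedAddCommGroup X]

theorem Lp.exists_forall_norm_le_of_ae_mem {C : Set X} (hbdd : Bornology.IsBounded C) :
    ∃ M : ℝ, ∀ x ∈ {x : Lp X ⊤ μ | ∀ᵐ ω ∂μ, x ω ∈ C}, ‖x‖ ≤ M := by
  obtain ⟨M, hM⟩ := hbdd.subset_closedBall 0
  refine ⟨max M 0, fun x hx => ?_⟩
  have hbound : ∀ᵐ ω ∂μ, ‖x ω‖ ≤ max M 0 := by
    filter_upwards [hx] with ω hω
    exact le_max_of_le_left (by simpa using hM hω)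
  rw [Lp.norm_def]
  refine ENNReal.toReal_le_of_le_ofReal (le_max_right _ _) ?_
  simpa using eLpNorm_le_of_ae_bound (p := ⊤) hbound

variable [NormedSpace ℝ X]

theorem integral_indicator_const_apply {A : Set Ω} (hA : MeasurableSet A) (φ : X →L[ℝ] ℝ)
    (x : Ω → X) : ∫ ω, A.indicator (fun _ => φ) ω (x ω) ∂μ = ∫ ω in A, φ (x ω) ∂μ := by
  rw [← integral_indicator hA]
  congr 1 with ω
  by_cases hω : ω ∈ A <;> simp [hω]

namespace Lp

theorem convex_setOf_ae_mem {p : ENNReal} {C : Set X} (hconv : Convex ℝ C) :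
    Convex ℝ {x : Lp X p μ | ∀ᵐ ω ∂μ, x ω ∈ C} := by
  intro x hx y hy a b ha hb hab
  filter_upwards [hx, hy, Lp.coeFn_add (a • x) (b • y), Lp.coeFn_smul a x, Lp.coeFn_smul b y]
    with ω hxω hyω hadd hax hby
  rw [hadd, Pi.add_apply, hax, hby, Pi.smul_apply, Pi.smul_apply]
  exact hconv hxω hyω ha hb hab

theorem continuous_weakStar_integral_apply {g : Ω → X →L[ℝ] ℝ} (hg : Integrable g μ) :
    Continuous[weakStarTopology μ X, inferInstance] fun x : Lp X ⊤ μ => ∫ ω, g ω (x ω) ∂μ :=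
  continuous_iff_le_induced.2 (iInf₂_le g hg)

theorem isClosed_weakStar_setOf_ae_apply_le [IsFiniteMeasure μ] (φ : X →L[ℝ] ℝ) (c : ℝ) :
    IsClosed[weakStarTopology μ X] {x : Lp X ⊤ μ | ∀ᵐ ω ∂μ, φ (x ω) ≤ c} := by
  have hint (x : Lp X ⊤ μ) : Integrable (fun ω => φ (x ω)) μ :=
    (φ.comp_memLp' (Lp.memLp x)).integrable le_top
  have hiInter : {x : Lp X ⊤ μ | ∀ᵐ ω ∂μ, φ (x ω) ≤ c} =
      ⋂ A : {A : Set Ω // MeasurableSet A},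
        (fun x : Lp X ⊤ μ => ∫ ω, A.1.indicator (fun _ => φ) ω (x ω) ∂μ) ⁻¹'
          Iic (c * μ.real A.1) := by
    ext x
    simp only [mem_ofPred_eq, mem_iInter, mem_preimage, mem_Iic, Subtype.forall,
      ae_le_const_iff_forall_setIntegral_le (hint x)]
    exact forall₂_congr fun A hA => by rw [integral_indicator_const_apply hA]
  rw [hiInter]
  let := weakStarTopology μ X
  exact isClosed_iInter fun A => isClosed_Iic.preimage
    (continuous_weakStar_integral_apply ((integrable_const φ).indicator A.2))

end Lp

end MeasureTheory

theorem ae_constraint_set_convex_bounded_weakStarClosed_general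
    {Ω : Type*} [MeasurableSpace Ω] (μ : Measure Ω) [IsProbabilityMeasure μ]
    {X : Type*} [NormedAddCommGroup X] [NormedSpace ℝ X]
    [TopologicalSpace.SeparableSpace X]
    (C : Set X) (hcl : IsClosed C) (hconv : Convex ℝ C)
    (hbdd : Bornology.IsBounded C) :
    Convex ℝ {x : Lp X ⊤ μ | ∀ᵐ ω ∂μ, (x : Ω → X) ω ∈ C} ∧
    (∃ M : ℝ, ∀ x ∈ {x : Lp X ⊤ μ | ∀ᵐ ω ∂μ, (x : Ω → X) ω ∈ C}, ‖x‖ ≤ M) ∧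
    @IsClosed _ (weakStarTopology μ X) {x : Lp X ⊤ μ | ∀ᵐ ω ∂μ, (x : Ω → X) ω ∈ C} := by
  refine ⟨Lp.convex_setOf_ae_mem hconv, Lp.exists_forall_norm_le_of_ae_mem hbdd, ?_⟩
  obtain ⟨S, hSc, hCS⟩ := hconv.exists_countable_eq_biInter_halfSpaces hcl
  have hiInter : {x : Lp X ⊤ μ | ∀ᵐ ω ∂μ, x ω ∈ C} =
      ⋂ q ∈ S, {x : Lp X ⊤ μ | ∀ᵐ ω ∂μ, q.1 (x ω) ≤ q.2} := by
    ext x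
    simp only [hCS, mem_ofPred_eq, mem_iInter₂]
    exact ae_ball_iff hSc
  rw [hiInter]
  let := weakStarTopology μ X
  exact isClosed_biInter fun q _ => Lp.isClosed_weakStar_setOf_ae_apply_le q.1 q.2

/-- For a nonempty closed convex bounded set `C ⊆ X` (X separable reflexive),
`X₀ = {x ∈ L^∞(Ω,X) : x(ω) ∈ C a.s.}` is convex, norm-bounded, and closed in the weak*
topology of `L^∞(Ω,X) = (L¹(Ω,X*))*`. -/
theorem ae_constraint_set_convex_bounded_weakStarClosed
    {Ω : Type*} [MeasurableSpace Ω] (μ : Measure Ω) [IsProbabilityMeasure μ]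
    {X : Type*} [NormedAddCommGroup X] [NormedSpace ℝ X] [CompleteSpace X]
    [TopologicalSpace.SeparableSpace X]
    (hrefl : Function.Surjective (NormedSpace.inclusionInDoubleDual ℝ X))
    (C : Set X) (hne : C.Nonempty) (hcl : IsClosed C) (hconv : Convex ℝ C)
    (hbdd : Bornology.IsBounded C) :
    Convex ℝ {x : Lp X ⊤ μ | ∀ᵐ ω ∂μ, (x : Ω → X) ω ∈ C} ∧
    (∃ M : ℝ, ∀ x ∈ {x : Lp X ⊤ μ | ∀ᵐ ω ∂μ, (x : Ω → X) ω ∈ C}, ‖x‖ ≤ M) ∧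
    @IsClosed _ (weakStarTopology μ X) {x : Lp X ⊤ μ | ∀ᵐ ω ∂μ, (x : Ω → X) ω ∈ C} :=
  ae_constraint_set_convex_bounded_weakStarClosed_general μ C hcl hconv hbdd
end

section
/- Let X be a separable reflexive Banach space, C ⊆ X nonempty closed convex, q ∈ L¹(Ω, X*), and x̄ ∈ L^∞(Ω, X) with x̄(ω) ∈ C a.s. If ∫_Ω ⟨q(ω), x(ω) − x̄(ω)⟩ dℙ(ω) ≥ 0 for every x ∈ L^∞(Ω, X) with x(ω) ∈ C a.s., then for almost every ω, ⟨q(ω), c − x̄(ω)⟩ ≥ 0 for all c ∈ C. -/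
/-!
For a fixed `c ∈ C` and a measurable set `s`, the selection equal to `c` on `s` and to `x̄`
off `s` is admissible, so the integrated inequality gives `∫ in s, ⟨q, c - x̄⟩ ≥ 0` for every
measurable `s`; hence `⟨q(ω), c - x̄(ω)⟩ ≥ 0` almost surely. Since `C` is separable, the
exceptional null sets for a countable dense subset of `C` have a null union, and outside it the
inequality extends to all of `C` because `{c | 0 ≤ ⟨q(ω), c - x̄(ω)⟩}` is closed.
-/

open MeasureTheory TopologicalSpace

section

variable {Ω : Type*} [MeasurableSpace Ω] {μ : Measure Ω}

theorem MeasureTheory.Integrable.clm_apply_of_memLp_top {𝕜 E F : Type*}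
    [NontriviallyNormedField 𝕜] [NormedAddCommGroup E] [NormedSpace 𝕜 E]
    [NormedAddCommGroup F] [NormedSpace 𝕜 F]
    {q : Ω → E →L[𝕜] F} (hq : Integrable q μ) {x : Ω → E} (hx : MemLp x ⊤ μ) :
    Integrable (fun ω ↦ q ω (x ω)) μ := by
  refine memLp_one_iff_integrable.1 <|
    (memLp_one_iff_integrable.2 hq).of_bilin (fun L v ↦ L v) 1 hx
    (isBoundedBilinearMap_apply.continuous.comp_aestronglyMeasurable (hq.1.prodMk hx.1)) ?_
  exact .of_forall fun ω ↦ by simpa using (q ω).le_opNNNorm (x ω)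

theorem ae_forall_mem_of_isSeparable {X : Type*} [TopologicalSpace X] [PseudoMetrizableSpace X]
    {C : Set X} (hC : IsSeparable C) {P : Ω → X → Prop} (hP : ∀ ω, IsClosed {c | P ω c})
    (h : ∀ c ∈ C, ∀ᵐ ω ∂μ, P ω c) : ∀ᵐ ω ∂μ, ∀ c ∈ C, P ω c := by
  obtain ⟨D, hDC, hD, hCD⟩ := hC.exists_countable_dense_subset
  filter_upwards [(ae_ball_iff hD).2 fun d hd ↦ h d (hDC hd)] with ω hω c hc
  exact closure_minimal (fun d hd ↦ hω d hd) (hP ω) (hCD hc)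

theorem ae_nonneg_apply_sub_of_forall_integral_nonneg {X : Type*} [NormedAddCommGroup X]
    [NormedSpace ℝ X] {C : Set X} {q : Ω → X →L[ℝ] ℝ} (hq : Integrable q μ) {xbar : Ω → X}
    (hxbar : MemLp xbar ⊤ μ) (hxbarC : ∀ᵐ ω ∂μ, xbar ω ∈ C)
    (hineq : ∀ x : Ω → X, MemLp x ⊤ μ → (∀ᵐ ω ∂μ, x ω ∈ C) →
      0 ≤ ∫ ω, q ω (x ω - xbar ω) ∂μ) {c : X} (hc : c ∈ C) :
    ∀ᵐ ω ∂μ, 0 ≤ q ω (c - xbar ω) := by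
  classical
  refine ae_nonneg_of_forall_setIntegral_nonneg
    (hq.clm_apply_of_memLp_top ((memLp_top_const c).sub hxbar)) fun s hs _ ↦ ?_
  set x := s.piecewise (fun _ ↦ c) xbar
  have hx : MemLp x ⊤ μ := (memLp_top_const c).piecewise hs (hxbar.restrict _)
  have hxC : ∀ᵐ ω ∂μ, x ω ∈ C := hxbarC.mono fun ω hω ↦ by
    by_cases hωs : ω ∈ s <;> simp [x, hωs, hω, hc]
  have hxsub : (fun ω ↦ q ω (x ω - xbar ω)) = s.indicator fun ω ↦ q ω (c - xbar ω) := by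
    ext ω
    by_cases hωs : ω ∈ s <;> simp [x, hωs]
  calc 0 ≤ ∫ ω, q ω (x ω - xbar ω) ∂μ := hineq x hx hxC
    _ = ∫ ω in s, q ω (c - xbar ω) ∂μ := by rw [hxsub, integral_indicator hs]

end

theorem pointwise_variational_inequality_of_integrated_general
    {Ω : Type*} [MeasurableSpace Ω] (μ : Measure Ω)
    {X : Type*} [NormedAddCommGroup X] [NormedSpace ℝ X]
    [TopologicalSpace.SeparableSpace X]
    (C : Set X)
    (q : Ω → (X →L[ℝ] ℝ)) (hq : Integrable q μ)
    (xbar : Ω → X) (hxbar : MemLp xbar ⊤ μ) (hxbarC : ∀ᵐ ω ∂μ, xbar ω ∈ C)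
    (hineq : ∀ x : Ω → X, MemLp x ⊤ μ → (∀ᵐ ω ∂μ, x ω ∈ C) →
      0 ≤ ∫ ω, q ω (x ω - xbar ω) ∂μ) :
    ∀ᵐ ω ∂μ, ∀ c ∈ C, 0 ≤ q ω (c - xbar ω) :=
  ae_forall_mem_of_isSeparable (.of_separableSpace C)
    (fun ω ↦ isClosed_le continuous_const ((q ω).continuous.comp (continuous_sub_right _)))
    fun _ hc ↦ ae_nonneg_apply_sub_of_forall_integral_nonneg hq hxbar hxbarC hineq hc

/-- If the integrated variational inequality
`∫ ⟨q(ω), x(ω) - x̄(ω)⟩ dℙ ≥ 0` holds over all essentially bounded selections `x` of a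
nonempty closed convex set `C` (in a separable reflexive Banach space), then the pointwise
variational inequality `⟨q(ω), c - x̄(ω)⟩ ≥ 0` for all `c ∈ C` holds almost surely. -/
theorem pointwise_variational_inequality_of_integrated
    {Ω : Type*} [MeasurableSpace Ω] (μ : Measure Ω) [IsProbabilityMeasure μ]
    {X : Type*} [NormedAddCommGroup X] [NormedSpace ℝ X] [CompleteSpace X]
    [TopologicalSpace.SeparableSpace X]
    (hrefl : Function.Surjective (NormedSpace.inclusionInDoubleDual ℝ X))
    (C : Set X) (hne : C.Nonempty) (hcl : IsClosed C) (hconv : Convex ℝ C)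
    (q : Ω → (X →L[ℝ] ℝ)) (hq : Integrable q μ)
    (xbar : Ω → X) (hxbar : MemLp xbar ⊤ μ) (hxbarC : ∀ᵐ ω ∂μ, xbar ω ∈ C)
    (hineq : ∀ x : Ω → X, MemLp x ⊤ μ → (∀ᵐ ω ∂μ, x ω ∈ C) →
      0 ≤ ∫ ω, q ω (x ω - xbar ω) ∂μ) :
    ∀ᵐ ω ∂μ, ∀ c ∈ C, 0 ≤ q ω (c - xbar ω) :=
  pointwise_variational_inequality_of_integrated_general μ C q hq xbar hxbar hxbarC hineq
end

section
/- Let h : X₁ → ℝ ∪ {∞} be proper convex and k : X₁ → ℝ ∪ {−∞} be proper concave on a real Banach space X₁, with one of them continuous at a common point of their domains. Then inf_{u ∈ X₁} (h(u) − k(u)) = max_{v ∈ X₁*} (k*(v) − h*(v)), where h*(v) = sup_u (⟨v, u⟩ − h(u)) and k*(v) = inf_u (⟨v, u⟩ − k(u)), and the maximum on the right-hand side is attained. -/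
/-!
Weak duality `k*(v) - h*(v) ≤ h u - k u` is a pointwise computation. For the reverse inequality
with `γ = inf (h - k)` finite, the epigraph of `h` and the hypograph of `k + γ` are convex sets,
the first has nonempty interior by continuity of `h` at `u₀`, and its interior misses the second.
A Hahn–Banach functional separating them cannot be vertical, since both sets lie over `u₀`;
normalising its vertical component to `-1` leaves a functional `v` with `h*(v) ≤ a` and
`a + γ ≤ k*(v)`. The case where `k` is continuous reduces to this one via `(h, k) ↦ (-k, -h)`,
which turns `v` into `-v`.
-/

open Set Filter Topology

namespace EReal

lemma coe_sub_sub_coe_sub (r : ℝ) {a b : EReal} (ha : a ≠ ⊥) (hb : b ≠ ⊤) :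
    ((r : EReal) - b) - ((r : EReal) - a) = a - b := by
  induction a <;> induction b <;> simp_all [← coe_sub]

lemma neg_mul_add_mul {a b : ℝ} (ha : 0 ≤ a) (hb : 0 ≤ b) {x y : EReal} (hx : x ≠ ⊤)
    (hy : y ≠ ⊤) : -((a : EReal) * x + (b : EReal) * y) = a * -x + b * -y := by
  rw [neg_add, mul_neg, mul_neg, sub_eq_add_neg] <;> simp [mul_ne_top, *]

lemma neg_sub_neg (x y : EReal) : -x - -y = y - x := by
  rw [sub_eq_add_neg, neg_neg, add_comm, sub_eq_add_neg]

lemma neg_iSup {ι : Sort*} (f : ι → EReal) : -⨆ i, f i = ⨅ i, -f i :=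
  negOrderIso.map_iSup f

lemma sub_ne_top_of_ne_top_of_ne_bot {x y : EReal} (hx : x ≠ ⊤) (hy : y ≠ ⊥) : x - y ≠ ⊤ := by
  induction x <;> induction y <;> simp_all [← coe_sub]

lemma sub_lt_of_lt_of_coe_sub_le {x y : EReal} {t c : ℝ} (hx : x < t)
    (hy : ((t - c : ℝ) : EReal) ≤ y) : x - y < c := by
  induction x <;> induction y <;> simp_all [← coe_sub]
  linarith

end EReal

section Graphs

variable {X : Type*}

def epigraph (h : X → EReal) : Set (X × ℝ) := {p | h p.1 ≤ p.2}

def hypograph (k : X → EReal) : Set (X × ℝ) := {p | (p.2 : EReal) ≤ k p.1}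

variable [TopologicalSpace X] {h : X → EReal}

lemma ContinuousAt.mk_mem_interior_epigraph {u₀ : X} {t : ℝ} (hcont : ContinuousAt h u₀)
    (ht : h u₀ < t) : (u₀, t) ∈ interior (epigraph h) := by
  obtain ⟨m, hm, hmt⟩ := EReal.exists_between_coe_real ht
  refine mem_interior_iff_mem_nhds.2 (mem_of_superset (prod_mem_nhds
    (hcont.preimage_mem_nhds (Iio_mem_nhds hm)) (Ioi_mem_nhds (EReal.coe_lt_coe_iff.1 hmt)))
    fun p ⟨hp₁, hp₂⟩ => ?_)
  exact (hp₁.trans (EReal.coe_lt_coe_iff.2 hp₂)).le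

lemma lt_of_mem_interior_epigraph {p : X × ℝ} (hp : p ∈ interior (epigraph h)) :
    h p.1 < p.2 := by
  have hev : ∀ᶠ t in 𝓝 p.2, (p.1, t) ∈ interior (epigraph h) :=
    (continuous_const.prodMk continuous_id).continuousAt.preimage_mem_nhds
      (isOpen_interior.mem_nhds hp)
  obtain ⟨t, htp, ht⟩ := hev.exists_lt
  exact (interior_subset ht : (p.1, t) ∈ epigraph h).trans_lt (EReal.coe_lt_coe_iff.2 htp)

end Graphs

section Convexity

variable {X : Type*} [AddCommGroup X] [Module ℝ X] {h k : X → EReal}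

def ERealConvex (h : X → EReal) : Prop :=
  ∀ x y : X, ∀ a b : ℝ, 0 ≤ a → 0 ≤ b → a + b = 1 →
    h (a • x + b • y) ≤ (a : EReal) * h x + (b : EReal) * h y

def ERealConcave (k : X → EReal) : Prop :=
  ∀ x y : X, ∀ a b : ℝ, 0 ≤ a → 0 ≤ b → a + b = 1 →
    (a : EReal) * k x + (b : EReal) * k y ≤ k (a • x + b • y)

lemma erealConvex_neg_iff (hk : ∀ u, k u ≠ ⊤) : ERealConvex (-k) ↔ ERealConcave k := by
  refine forall₄_congr fun x y a b => imp_congr_right fun ha => imp_congr_right fun hb =>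
    imp_congr_right fun _ => ?_
  rw [Pi.neg_apply, Pi.neg_apply, Pi.neg_apply, ← EReal.neg_mul_add_mul ha hb (hk x) (hk y),
    EReal.neg_le_neg_iff]

lemma ERealConvex.neg (hh : ERealConvex h) (hh_bot : ∀ u, h u ≠ ⊥) : ERealConcave (-h) :=
  (erealConvex_neg_iff fun u => by simpa using hh_bot u).1 (by rwa [neg_neg])

lemma ERealConcave.neg (hk : ERealConcave k) (hk_top : ∀ u, k u ≠ ⊤) : ERealConvex (-k) :=
  (erealConvex_neg_iff hk_top).2 hk

lemma ERealConvex.convex_epigraph (hh : ERealConvex h) : Convex ℝ (epigraph h) := by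
  rintro ⟨x, s⟩ hx ⟨y, t⟩ hy a b ha hb hab
  calc h (a • x + b • y) ≤ (a : EReal) * h x + (b : EReal) * h y := hh x y a b ha hb hab
    _ ≤ (a : EReal) * s + (b : EReal) * t := by gcongr <;> assumption
    _ = ((a • (x, s) + b • (y, t)).2 : ℝ) := by simp

lemma ERealConcave.convex_hypograph (hk : ERealConcave k) : Convex ℝ (hypograph k) := by
  rintro ⟨x, s⟩ hx ⟨y, t⟩ hy a b ha hb hab
  calc (((a • (x, s) + b • (y, t)).2 : ℝ) : EReal) = (a : EReal) * s + (b : EReal) * t := by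
        simp
    _ ≤ (a : EReal) * k x + (b : EReal) * k y := by gcongr <;> assumption
    _ ≤ k (a • x + b • y) := hk x y a b ha hb hab

end Convexity

theorem geometric_hahn_banach_of_nonempty_interior_strict {E : Type*} [TopologicalSpace E]
    [AddCommGroup E] [Module ℝ E] [IsTopologicalAddGroup E] [ContinuousSMul ℝ E] {s t : Set E}
    (hs : Convex ℝ s) (ht : Convex ℝ t) (hst : Disjoint (interior s) t)
    (hsint : (interior s).Nonempty) :
    ∃ (f : E →L[ℝ] ℝ) (α : ℝ),
      (∀ a ∈ interior s, f a < α) ∧ (∀ a ∈ s, f a ≤ α) ∧ ∀ b ∈ t, α ≤ f b := by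
  obtain ⟨f, α, hfs, hft⟩ := geometric_hahn_banach_open hs.interior isOpen_interior ht hst
  refine ⟨f, α, hfs, fun a ha => ?_, hft⟩
  have ha' : a ∈ closure (interior s) := by
    rw [hs.closure_interior_eq_closure_of_nonempty_interior hsint]
    exact subset_closure ha
  exact closure_minimal (fun x hx => (hfs x hx).le) (isClosed_Iic.preimage f.continuous) ha'

section Conjugate

variable {X : Type*} [AddCommGroup X] [Module ℝ X] [TopologicalSpace X] {h k : X → EReal}

noncomputable def convexConjugate (h : X → EReal) (v : X →L[ℝ] ℝ) : EReal :=
  ⨆ u, ((v u : ℝ) : EReal) - h u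

noncomputable def concaveConjugate (k : X → EReal) (v : X →L[ℝ] ℝ) : EReal :=
  ⨅ u, ((v u : ℝ) : EReal) - k u

lemma concaveConjugate_neg (k : X → EReal) (v : X →L[ℝ] ℝ) :
    concaveConjugate k (-v) = -convexConjugate (-k) v := by
  simp only [concaveConjugate, convexConjugate, EReal.neg_iSup]
  congr! 2 with u
  rw [EReal.neg_sub (by simp) (by simp)]
  simp [sub_eq_add_neg]

lemma convexConjugate_neg (h : X → EReal) (v : X →L[ℝ] ℝ) :
    convexConjugate h (-v) = -concaveConjugate (-h) v := by
  rw [← neg_neg v, concaveConjugate_neg, neg_neg, neg_neg, neg_neg]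

lemma concaveConjugate_sub_convexConjugate_le (hh : ∀ u, h u ≠ ⊥) (hk : ∀ u, k u ≠ ⊤)
    (v : X →L[ℝ] ℝ) : concaveConjugate k v - convexConjugate h v ≤ ⨅ u, h u - k u :=
  le_iInf fun u => calc
    concaveConjugate k v - convexConjugate h v ≤ ((v u : EReal) - k u) - ((v u : EReal) - h u) :=
      EReal.sub_le_sub (iInf_le _ u) (le_iSup (fun w => ((v w : ℝ) : EReal) - h w) u)
    _ = h u - k u := EReal.coe_sub_sub_coe_sub _ (hh u) (hk u)

lemma le_concaveConjugate_sub_convexConjugate {v : X →L[ℝ] ℝ} {a c : ℝ}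
    (hh : ∀ u, h u ≠ ⊥) (hk : ∀ u, k u ≠ ⊤)
    (hvh : ∀ u (t : ℝ), h u ≤ t → v u - t ≤ a) (hvk : ∀ u (t : ℝ), t ≤ k u → a + c ≤ v u - t) :
    (c : EReal) ≤ concaveConjugate k v - convexConjugate h v := by
  have hconv : convexConjugate h v ≤ a := iSup_le fun u => by
    induction hhu : h u with
    | bot => exact absurd hhu (hh u)
    | top => simp
    | coe x => exact_mod_cast hvh u x hhu.le
  have hconc : ((a + c : ℝ) : EReal) ≤ concaveConjugate k v := le_iInf fun u => by
    induction hku : k u with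
    | bot => simp
    | top => exact absurd hku (hk u)
    | coe y => exact_mod_cast hvk u y hku.ge
  calc (c : EReal) = ((a + c : ℝ) : EReal) - (a : ℝ) := by
        rw [← EReal.coe_sub, add_sub_cancel_left]
    _ ≤ concaveConjugate k v - convexConjugate h v := EReal.sub_le_sub hconc hconv

lemma exists_affine_bounds_of_separation {c α r₀ : ℝ} {u₀ : X} (f : X × ℝ →L[ℝ] ℝ)
    (hr₀ : h u₀ < r₀) (hf₀ : f (u₀, r₀) < α) (hku₀ : k u₀ ≠ ⊥)
    (hfh : ∀ u (t : ℝ), h u ≤ t → f (u, t) ≤ α) (hfk : ∀ u (t : ℝ), t ≤ k u → α ≤ f (u, t + c)) :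
    ∃ (v : X →L[ℝ] ℝ) (a : ℝ),
      (∀ u (t : ℝ), h u ≤ t → v u - t ≤ a) ∧ ∀ u (t : ℝ), t ≤ k u → a + c ≤ v u - t := by
  have hsplit : ∀ u t, f (u, t) = f (u, 0) + t * f (0, 1) := fun u t => by
    rw [← smul_eq_mul, ← map_smul, ← map_add, Prod.smul_mk, smul_zero, smul_eq_mul, mul_one,
      Prod.mk_add_mk, add_zero, zero_add]
  obtain ⟨s, -, hs⟩ := EReal.exists_between_coe_real (bot_lt_iff_ne_bot.2 hku₀)
  have hβ_nonpos : f (0, 1) ≤ 0 := by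
    by_contra! hβ
    have hf_tendsto : Tendsto (fun t => f (u₀, t)) atTop atTop := by
      rw [funext (hsplit u₀)]
      exact tendsto_atTop_add_const_left _ _ (tendsto_id.atTop_mul_const hβ)
    obtain ⟨t, hrt, hαt⟩ :=
      ((eventually_ge_atTop r₀).and (hf_tendsto.eventually_gt_atTop α)).exists
    exact hαt.not_ge (hfh u₀ t (hr₀.le.trans (EReal.coe_le_coe_iff.2 hrt)))
  have hβ_ne : f (0, 1) ≠ 0 := fun hβ => by
    have h_lt := hf₀.trans_le (hfk u₀ s hs.le)
    rw [hsplit u₀ r₀, hsplit u₀ (s + c), hβ, mul_zero, mul_zero] at h_lt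
    exact lt_irrefl _ h_lt
  obtain ⟨l, hl, hsplit'⟩ : ∃ l : ℝ, 0 < l ∧ ∀ u t, f (u, t) = f (u, 0) - t * l :=
    ⟨-f (0, 1), neg_pos.2 (hβ_nonpos.lt_of_ne hβ_ne), fun u t => by rw [hsplit]; ring⟩
  refine ⟨l⁻¹ • f.comp (ContinuousLinearMap.inl ℝ X ℝ), l⁻¹ * α, fun u t ht => ?_,
    fun u t ht => ?_⟩
  · calc l⁻¹ * f (u, 0) - t = l⁻¹ * f (u, t) := by rw [hsplit' u t]; field_simp
      _ ≤ l⁻¹ * α := by gcongr; exact hfh u t ht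
  · calc l⁻¹ * α + c ≤ l⁻¹ * f (u, t + c) + c := by gcongr; exact hfk u t ht
      _ = l⁻¹ * f (u, 0) - t := by rw [hsplit' u (t + c)]; field_simp; ring

variable [IsTopologicalAddGroup X] [ContinuousSMul ℝ X]

lemma exists_separation_epigraph_hypograph (hh : ERealConvex h) (hk : ERealConcave k) {c : ℝ}
    (hc : ∀ u, (c : EReal) ≤ h u - k u) {u₀ : X} (hu₀ : h u₀ ≠ ⊤) (hcont : ContinuousAt h u₀) :
    ∃ (f : X × ℝ →L[ℝ] ℝ) (α r₀ : ℝ), h u₀ < r₀ ∧ f (u₀, r₀) < α ∧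
      (∀ u (t : ℝ), h u ≤ t → f (u, t) ≤ α) ∧ ∀ u (t : ℝ), t ≤ k u → α ≤ f (u, t + c) := by
  obtain ⟨r₀, hr₀, -⟩ := EReal.exists_between_coe_real (lt_top_iff_ne_top.2 hu₀)
  have hint := hcont.mk_mem_interior_epigraph hr₀
  -- the preimage is the hypograph of `k + c`
  have hdisj : Disjoint (interior (epigraph h)) ((· + (0, -c)) ⁻¹' hypograph k) := by
    refine Set.disjoint_left.2 fun p hp hpk => (hc p.1).not_gt ?_
    refine EReal.sub_lt_of_lt_of_coe_sub_le (lt_of_mem_interior_epigraph hp) ?_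
    simpa [hypograph, sub_eq_add_neg] using hpk
  obtain ⟨f, α, hf_int, hf_epi, hf_hyp⟩ := geometric_hahn_banach_of_nonempty_interior_strict
    hh.convex_epigraph (hk.convex_hypograph.translate_preimage_left _) hdisj ⟨_, hint⟩
  refine ⟨f, α, r₀, hr₀, hf_int _ hint, fun u t ht => hf_epi (u, t) ht, fun u t ht => ?_⟩
  refine hf_hyp (u, t + c) ?_
  change ((t + c + -c : ℝ) : EReal) ≤ k (u + 0)
  rwa [add_neg_cancel_right, add_zero]

theorem exists_concaveConjugate_sub_convexConjugate_eq_of_continuousAt_left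
    (hh : ERealConvex h) (hk : ERealConcave k) (hh_bot : ∀ u, h u ≠ ⊥) (hk_top : ∀ u, k u ≠ ⊤)
    {u₀ : X} (hu₀h : h u₀ ≠ ⊤) (hu₀k : k u₀ ≠ ⊥) (hcont : ContinuousAt h u₀) :
    ∃ v, concaveConjugate k v - convexConjugate h v = ⨅ u, h u - k u := by
  have hweak := concaveConjugate_sub_convexConjugate_le hh_bot hk_top
  induction hγ : ⨅ u, h u - k u with
  | bot => exact ⟨0, le_bot_iff.1 (hγ ▸ hweak 0)⟩
  | top =>
    exact absurd hγ (ne_top_of_le_ne_top (EReal.sub_ne_top_of_ne_top_of_ne_bot hu₀h hu₀k)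
      (iInf_le _ u₀))
  | coe c =>
    have hc : ∀ u, (c : EReal) ≤ h u - k u := fun u => hγ ▸ iInf_le _ u
    obtain ⟨f, α, r₀, hr₀, hf₀, hfh, hfk⟩ :=
      exists_separation_epigraph_hypograph hh hk hc hu₀h hcont
    obtain ⟨v, a, hvh, hvk⟩ := exists_affine_bounds_of_separation f hr₀ hf₀ hu₀k hfh hfk
    exact ⟨v, le_antisymm (hγ ▸ hweak v)
      (le_concaveConjugate_sub_convexConjugate hh_bot hk_top hvh hvk)⟩

theorem exists_concaveConjugate_sub_convexConjugate_eq_of_continuousAt_right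
    (hh : ERealConvex h) (hk : ERealConcave k) (hh_bot : ∀ u, h u ≠ ⊥) (hk_top : ∀ u, k u ≠ ⊤)
    {u₀ : X} (hu₀h : h u₀ ≠ ⊤) (hu₀k : k u₀ ≠ ⊥) (hcont : ContinuousAt k u₀) :
    ∃ v, concaveConjugate k v - convexConjugate h v = ⨅ u, h u - k u := by
  obtain ⟨v, hv⟩ := exists_concaveConjugate_sub_convexConjugate_eq_of_continuousAt_left
    (hk.neg hk_top) (hh.neg hh_bot) (by simpa using hk_top) (by simpa using hh_bot)
    (by simpa using hu₀k) (by simpa using hu₀h) hcont.neg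
  refine ⟨-v, ?_⟩
  simpa only [concaveConjugate_neg, convexConjugate_neg, EReal.neg_sub_neg, Pi.neg_apply]
    using hv

end Conjugate

theorem fenchel_duality_general
    {X₁ : Type*} [NormedAddCommGroup X₁] [NormedSpace ℝ X₁]
    (h k : X₁ → EReal)
    (hhproper : (∀ u, h u ≠ ⊥) ∧ ∃ u, h u ≠ ⊤)
    (hkproper : (∀ u, k u ≠ ⊤) ∧ ∃ u, k u ≠ ⊥)
    (hhconv : ∀ x y : X₁, ∀ a b : ℝ, 0 ≤ a → 0 ≤ b → a + b = 1 →
      h (a • x + b • y) ≤ (a : EReal) * h x + (b : EReal) * h y)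
    (hkconc : ∀ x y : X₁, ∀ a b : ℝ, 0 ≤ a → 0 ≤ b → a + b = 1 →
      (a : EReal) * k x + (b : EReal) * k y ≤ k (a • x + b • y))
    (hcont : ∃ u₀ : X₁, h u₀ ≠ ⊤ ∧ k u₀ ≠ ⊥ ∧ (ContinuousAt h u₀ ∨ ContinuousAt k u₀)) :
    ∃ v : X₁ →L[ℝ] ℝ,
      ((⨅ u : X₁, (((v u : ℝ) : EReal) - k u)) - ⨆ u : X₁, (((v u : ℝ) : EReal) - h u))
        = (⨅ u : X₁, (h u - k u)) ∧
      ∀ v' : X₁ →L[ℝ] ℝ,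
        ((⨅ u : X₁, (((v' u : ℝ) : EReal) - k u)) - ⨆ u : X₁, (((v' u : ℝ) : EReal) - h u))
          ≤ ⨅ u : X₁, (h u - k u) := by
  obtain ⟨u₀, hu₀h, hu₀k, hcont⟩ := hcont
  obtain ⟨v, hv⟩ : ∃ v, concaveConjugate k v - convexConjugate h v = ⨅ u, h u - k u := hcont.elim
    (exists_concaveConjugate_sub_convexConjugate_eq_of_continuousAt_left
      hhconv hkconc hhproper.1 hkproper.1 hu₀h hu₀k)
    (exists_concaveConjugate_sub_convexConjugate_eq_of_continuousAt_right
      hhconv hkconc hhproper.1 hkproper.1 hu₀h hu₀k)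
  exact ⟨v, hv, concaveConjugate_sub_convexConjugate_le hhproper.1 hkproper.1⟩

/-- Fenchel's duality theorem. For `h` proper convex and `k` proper concave
on a real Banach space `X₁`, with one of them continuous at a common point of their
domains, `inf_u (h(u) - k(u)) = max_v (k*(v) - h*(v))`, the maximum being attained, where
`h*(v) = sup_u (⟨v,u⟩ - h(u))` and `k*(v) = inf_u (⟨v,u⟩ - k(u))`. -/
theorem fenchel_duality
    {X₁ : Type*} [NormedAddCommGroup X₁] [NormedSpace ℝ X₁] [CompleteSpace X₁]
    (h k : X₁ → EReal)
    (hhproper : (∀ u, h u ≠ ⊥) ∧ ∃ u, h u ≠ ⊤)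
    (hkproper : (∀ u, k u ≠ ⊤) ∧ ∃ u, k u ≠ ⊥)
    (hhconv : ∀ x y : X₁, ∀ a b : ℝ, 0 ≤ a → 0 ≤ b → a + b = 1 →
      h (a • x + b • y) ≤ (a : EReal) * h x + (b : EReal) * h y)
    (hkconc : ∀ x y : X₁, ∀ a b : ℝ, 0 ≤ a → 0 ≤ b → a + b = 1 →
      (a : EReal) * k x + (b : EReal) * k y ≤ k (a • x + b • y))
    (hcont : ∃ u₀ : X₁, h u₀ ≠ ⊤ ∧ k u₀ ≠ ⊥ ∧ (ContinuousAt h u₀ ∨ ContinuousAt k u₀)) :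
    ∃ v : X₁ →L[ℝ] ℝ,
      ((⨅ u : X₁, (((v u : ℝ) : EReal) - k u)) - ⨆ u : X₁, (((v u : ℝ) : EReal) - h u))
        = (⨅ u : X₁, (h u - k u)) ∧
      ∀ v' : X₁ →L[ℝ] ℝ,
        ((⨅ u : X₁, (((v' u : ℝ) : EReal) - k u)) - ⨆ u : X₁, (((v' u : ℝ) : EReal) - h u))
          ≤ ⨅ u : X₁, (h u - k u) :=
  fenchel_duality_general h k hhproper hkproper hhconv hkconc hcont
end
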